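/- In the ring R = ℂ[x,y,z]/(x² − yz), the R-module M = { f ∈ Frac(R) : f·(x,y) ⊆ R } of sections of the divisorial sheaf O_X(D) (where D = {x=y=0}) is generated by 1 and z/x, i.e. M = R·1 + R·(z/x). -/

import Mathlib

open MvPolynomial

set_option synthInstance.maxHeartbeats 1000000
set_option maxHeartbeats 2000000

/-- The coordinate ring `ℂ[x,y,z]/(x² − yz)` of the affine quadric cone. -/
noncomputable abbrev QuadricCone : Type :=
  MvPolynomial (Fin 3) ℂ ⧸
    Ideal.span {(X 0 ^ 2 - X 1 * X 2 : MvPolynomial (Fin 3) ℂ)}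

/-- The quotient map `ℂ[x,y,z] → ℂ[x,y,z]/(x² − yz)`. -/
noncomputable abbrev qmk : MvPolynomial (Fin 3) ℂ →+* QuadricCone :=
  Ideal.Quotient.mk _

noncomputable def sig : MvPolynomial (Fin 3) ℂ →ₐ[ℂ] MvPolynomial (Fin 3) ℂ :=
  aeval ![0, X 1, 0]

lemma sig_X0 : sig (X 0) = 0 := by simp [sig]
lemma sig_X1 : sig (X 1) = X 1 := by simp [sig]
lemma sig_X2 : sig (X 2) = 0 := by simp [sig]

lemma sub_sig_mem (A : MvPolynomial (Fin 3) ℂ) :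
    A - sig A ∈ Ideal.span ({X 0, X 2} : Set (MvPolynomial (Fin 3) ℂ)) := by
  induction A using MvPolynomial.induction_on with
  | C c => simp [sig]
  | add p q hp hq => simpa [map_add, add_sub_add_comm] using add_mem hp hq
  | mul_X p n hp =>
      have : p * X n - sig (p * X n) = (p - sig p) * X n + sig p * (X n - sig (X n)) := by
        rw [map_mul]; ring
      rw [this]
      refine add_mem (Ideal.mul_mem_right _ _ hp) ?_
      fin_cases n
      · show sig p * (X 0 - sig (X 0)) ∈ _
        rw [sig_X0, sub_zero]
        exact Ideal.mul_mem_left _ _ (Ideal.subset_span (by simp))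
      · show sig p * (X 1 - sig (X 1)) ∈ _
        rw [sig_X1, sub_self, mul_zero]; exact zero_mem _
      · show sig p * (X 2 - sig (X 2)) ∈ _
        rw [sig_X2, sub_zero]
        exact Ideal.mul_mem_left _ _ (Ideal.subset_span (by simp))

lemma qmk_X0_ne_zero : qmk (X 0) ≠ 0 := by
  intro h
  rw [Ideal.Quotient.eq_zero_iff_mem, Ideal.mem_span_singleton'] at h
  obtain ⟨c, hc⟩ := h
  have := congrArg (aeval ![X 1, X 1, X 1] : MvPolynomial (Fin 3) ℂ →ₐ[ℂ] MvPolynomial (Fin 3) ℂ) hc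
  simp only [map_mul, map_sub, map_pow, aeval_X, Matrix.cons_val_zero, Matrix.cons_val_one,
    Matrix.head_cons, Matrix.cons_val_two, Matrix.tail_cons] at this
  have h0 : (X 1 : MvPolynomial (Fin 3) ℂ) = 0 := by linear_combination -this
  exact MvPolynomial.X_ne_zero 1 h0

lemma qmk_rel : qmk (X 1) * qmk (X 2) = qmk (X 0) * qmk (X 0) := by
  rw [← sub_eq_zero, ← map_mul, ← map_mul, ← map_sub, Ideal.Quotient.eq_zero_iff_mem,
    Ideal.mem_span_singleton]
  exact ⟨-1, by ring⟩

/-- In `R = ℂ[x,y,z]/(x² − yz)`, the `R`-module `M = { f ∈ Frac(R) : f·(x,y) ⊆ R }` of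
sections of `O_X(D)` for `D = {x = y = 0}` is generated by `1` and `z/x`. -/
theorem stmt_10 [IsDomain QuadricCone] :
    {f : FractionRing QuadricCone |
        ∀ g ∈ Ideal.span ({qmk (X 0), qmk (X 1)} : Set QuadricCone),
          f * algebraMap QuadricCone (FractionRing QuadricCone) g ∈
            Set.range (algebraMap QuadricCone (FractionRing QuadricCone))} =
      ↑(Submodule.span QuadricCone
        ({1, algebraMap QuadricCone (FractionRing QuadricCone) (qmk (X 2)) /
              algebraMap QuadricCone (FractionRing QuadricCone) (qmk (X 0))} :
          Set (FractionRing QuadricCone))) := by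
  let ι := algebraMap QuadricCone (FractionRing QuadricCone)
  have hinj : Function.Injective ι :=
    IsFractionRing.injective QuadricCone (FractionRing QuadricCone)
  have hιx : ι (qmk (X 0)) ≠ 0 := fun h => qmk_X0_ne_zero (hinj (by simpa using h))
  ext f
  simp only [Set.mem_setOf_eq, SetLike.mem_coe]
  constructor
  · intro h
    obtain ⟨A, hA⟩ := h (qmk (X 0)) (Ideal.subset_span (by simp))
    obtain ⟨B, hB⟩ := h (qmk (X 1)) (Ideal.subset_span (by simp))
    have hAB : A * qmk (X 1) = B * qmk (X 0) := by
      apply hinj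
      rw [map_mul, map_mul, hA, hB]
      ring
    obtain ⟨A₀, rfl⟩ := Ideal.Quotient.mk_surjective A
    obtain ⟨B₀, rfl⟩ := Ideal.Quotient.mk_surjective B
    have hmem : A₀ * X 1 - B₀ * X 0 ∈
        Ideal.span {(X 0 ^ 2 - X 1 * X 2 : MvPolynomial (Fin 3) ℂ)} := by
      rw [← Ideal.Quotient.eq_zero_iff_mem, map_sub, map_mul, map_mul, sub_eq_zero]
      exact hAB
    obtain ⟨c, hc⟩ := Ideal.mem_span_singleton'.mp hmem
    have hsig : sig A₀ * X 1 = 0 := by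
      have := congrArg sig hc
      simp only [map_mul, map_sub, map_pow, sig_X0, sig_X1, sig_X2] at this
      linear_combination -this
    have hsig0 : sig A₀ = 0 := by
      rcases mul_eq_zero.mp hsig with h' | h'
      · exact h'
      · exact absurd h' (MvPolynomial.X_ne_zero 1)
    have hA₀ : A₀ ∈ Ideal.span ({X 0, X 2} : Set (MvPolynomial (Fin 3) ℂ)) := by
      simpa [hsig0] using sub_sig_mem A₀
    obtain ⟨P, Q, hPQ⟩ := Ideal.mem_span_pair.mp hA₀
    refine Submodule.mem_span_pair.mpr ⟨qmk P, qmk Q, ?_⟩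
    have hf : f = ι (qmk A₀) / ι (qmk (X 0)) := by
      rw [eq_div_iff hιx, ← hA]
    rw [hf, ← hPQ, map_add, map_mul, map_mul, map_add, map_mul, map_mul,
      ← algebraMap_smul (FractionRing QuadricCone) (qmk P),
      ← algebraMap_smul (FractionRing QuadricCone) (qmk Q), smul_eq_mul, smul_eq_mul, mul_one]
    have hιx' : algebraMap QuadricCone (FractionRing QuadricCone) (qmk (X 0)) ≠ 0 := hιx
    field_simp
    ring
  · intro hf g hg
    obtain ⟨a, b, hab⟩ := Submodule.mem_span_pair.mp hf
    obtain ⟨u, v, huv⟩ := Ideal.mem_span_pair.mp hg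
    refine ⟨a * (u * qmk (X 0) + v * qmk (X 1)) + b * (u * qmk (X 2) + v * qmk (X 0)), ?_⟩
    have hrel : ι (qmk (X 1)) * ι (qmk (X 2)) = ι (qmk (X 0)) * ι (qmk (X 0)) := by
      have := congrArg ι qmk_rel; simpa [map_mul] using this
    rw [← algebraMap_smul (FractionRing QuadricCone) a, ← algebraMap_smul (FractionRing QuadricCone) b,
      smul_eq_mul, smul_eq_mul, mul_one] at hab
    rw [← hab, ← huv]
    simp only [map_add, map_mul]
    have hιx' : algebraMap QuadricCone (FractionRing QuadricCone) (qmk (X 0)) ≠ 0 := hιx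
    field_simp
    linear_combination (-(algebraMap QuadricCone (FractionRing QuadricCone) b *
      algebraMap QuadricCone (FractionRing QuadricCone) v)) * hrel
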